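/- arXiv:1209.1825 — 2 statements merged into one kernel-verified Lean document; each statement's English description precedes it below -/
import Mathlib

section
/- Let γ > 0 be a constant and let b : ℝ → ℝ be continuously differentiable on [0, ∞) with b(t) > 0 for all t ≥ 0. Assume lim_{t→∞} b(t) = 0 and lim_{t→∞} b'(t)/b(t) = 0. Then lim_{t→∞} (∫₀ᵗ e^{-γ(t-s)}·b(s) ds) / b(t) = 1/γ. -/
/-!
With `G t = e^{γ t} b t`, the quotient equals `(∫₀ᵗ G) / G t`. The ratio of derivatives is
`G t / G' t = 1 / (γ + b' t / b t) → 1 / γ`, and `G → ∞` because `log (b t) / t → 0` (L'Hôpital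
once more, with denominator `t`). The `∞ / ∞` form of L'Hôpital's rule then gives the limit.
-/

open Filter Topology Set Real

theorem lhopital_atTop_of_tendsto_atTop {f g f' g' : ℝ → ℝ} {l : ℝ}
    (hff' : ∀ᶠ x in atTop, HasDerivAt f (f' x) x) (hgg' : ∀ᶠ x in atTop, HasDerivAt g (g' x) x)
    (hg' : ∀ᶠ x in atTop, g' x ≠ 0) (hg : Tendsto g atTop atTop)
    (hdiv : Tendsto (fun x => f' x / g' x) atTop (𝓝 l)) :
    Tendsto (fun x => f x / g x) atTop (𝓝 l) := by
  rw [Metric.tendsto_nhds]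
  intro ε hε
  obtain ⟨a, ha⟩ := eventually_atTop.1
    (hff'.and <| hgg'.and <| hg'.and <| Metric.tendsto_nhds.1 hdiv (ε / 2) (half_pos hε))
  have hslope : ∀ t > a, |f t - l * g t - (f a - l * g a)| ≤ ε / 2 * |g t - g a| := by
    intro t ht
    have hderiv : ∀ x ∈ Icc a t, HasDerivAt f (f' x) x ∧ HasDerivAt g (g' x) x :=
      fun x hx => ⟨(ha x hx.1).1, (ha x hx.1).2.1⟩
    obtain ⟨c, hc, hcauchy⟩ := exists_ratio_hasDerivAt_eq_ratio_slope f f' ht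
      (fun x hx => (hderiv x hx).1.continuousAt.continuousWithinAt)
      (fun x hx => (hderiv x (Ioo_subset_Icc_self hx)).1)
      g g' (fun x hx => (hderiv x hx).2.continuousAt.continuousWithinAt)
      (fun x hx => (hderiv x (Ioo_subset_Icc_self hx)).2)
    obtain ⟨-, -, hg'c, hclose⟩ := ha c hc.1.le
    have hmvt : f' c / g' c * (g t - g a) = f t - f a := by
      rw [div_mul_eq_mul_div, div_eq_iff hg'c]
      linear_combination hcauchy
    have hrepr : f t - l * g t - (f a - l * g a) = (f' c / g' c - l) * (g t - g a) := by
      linear_combination -hmvt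
    rw [hrepr, abs_mul, ← Real.dist_eq]
    exact mul_le_mul_of_nonneg_right hclose.le (abs_nonneg _)
  filter_upwards [eventually_gt_atTop a, hg.eventually_gt_atTop 0,
    hg.eventually_gt_atTop (2 * (|f a - l * g a| + ε / 2 * |g a|) / ε)] with t hta hgt hgtC
  have hA : 2 * (|f a - l * g a| + ε / 2 * |g a|) < ε * g t := by
    rwa [div_lt_iff₀' hε] at hgtC
  have hdiff : f t / g t - l = (f t - l * g t) / g t := by field_simp
  rw [Real.dist_eq, hdiff, abs_div, abs_of_pos hgt, div_lt_iff₀ hgt]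
  calc |f t - l * g t| ≤ |f a - l * g a| + ε / 2 * |g t - g a| := by
        have := abs_sub_abs_le_abs_sub (f t - l * g t) (f a - l * g a)
        linarith [hslope t hta]
    _ ≤ |f a - l * g a| + ε / 2 * (g t + |g a|) := by
        gcongr
        exact (abs_sub _ _).trans_eq (by rw [abs_of_pos hgt])
    _ < ε * g t := by linarith

section LogDeriv

variable {b : ℝ → ℝ} (hb : ∀ᶠ t in atTop, DifferentiableAt ℝ b t)
  (hbpos : ∀ᶠ t in atTop, 0 < b t) (hbq : Tendsto (logDeriv b) atTop (𝓝 0))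
include hb hbpos hbq

theorem tendsto_log_div_self_of_tendsto_logDeriv_zero :
    Tendsto (fun t => log (b t) / t) atTop (𝓝 0) := by
  refine lhopital_atTop_of_tendsto_atTop (f' := logDeriv b) (g' := fun _ => 1)
    ?_ (.of_forall hasDerivAt_id) (.of_forall fun _ => one_ne_zero) tendsto_id
    (by simpa using hbq)
  filter_upwards [hb, hbpos] with t hbt hbt0
  exact hbt.hasDerivAt.log hbt0.ne'

theorem tendsto_exp_mul_mul_atTop_of_tendsto_logDeriv_zero {c : ℝ} (hc : 0 < c) :
    Tendsto (fun t => exp (c * t) * b t) atTop atTop := by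
  have hexponent : Tendsto (fun t => t * (c + log (b t) / t)) atTop atTop :=
    tendsto_id.atTop_mul_pos hc <| by
      simpa using (tendsto_log_div_self_of_tendsto_logDeriv_zero hb hbpos hbq).const_add c
  refine (tendsto_exp_atTop.comp hexponent).congr' ?_
  filter_upwards [hbpos, eventually_gt_atTop 0] with t hbt ht
  rw [Function.comp_apply, mul_add, mul_comm t c, mul_div_cancel₀ _ ht.ne', exp_add, exp_log hbt]

end LogDeriv

theorem hasDerivAt_integral_of_continuousOn_Ici {u : ℝ → ℝ} {a t : ℝ}
    (hu : ContinuousOn u (Ici a)) (ht : a < t) :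
    HasDerivAt (fun x => ∫ s in a..x, u s) (u t) t :=
  intervalIntegral.integral_hasDerivAt_right
    ((hu.mono Icc_subset_Ici_self).intervalIntegrable_of_Icc ht.le)
    ((hu.mono Ioi_subset_Ici_self).stronglyMeasurableAtFilter isOpen_Ioi t ht)
    (hu.continuousAt (Ici_mem_nhds ht))

theorem stmt_2_general (γ : ℝ) (hγ : 0 < γ) (b : ℝ → ℝ)
    (hb : ∀ t ≥ (0:ℝ), DifferentiableAt ℝ b t)
    (hbpos : ∀ t ≥ (0:ℝ), 0 < b t)
    (hbq : Filter.Tendsto (fun t => deriv b t / b t) Filter.atTop (nhds 0)) :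
    Filter.Tendsto
      (fun t => (∫ s in (0:ℝ)..t, Real.exp (-γ * (t - s)) * b s) / b t)
      Filter.atTop (nhds (1/γ)) := by
  set G : ℝ → ℝ := fun t => exp (γ * t) * b t with hG
  have hb_ev : ∀ᶠ t in atTop, DifferentiableAt ℝ b t := eventually_atTop.2 ⟨0, hb⟩
  have hbpos_ev : ∀ᶠ t in atTop, 0 < b t := eventually_atTop.2 ⟨0, hbpos⟩
  have hquot (t : ℝ) : (∫ s in (0:ℝ)..t, exp (-γ * (t - s)) * b s) / b t
      = (∫ s in (0:ℝ)..t, G s) / G t := by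
    have hexp (s : ℝ) : exp (-γ * (t - s)) * b s = exp (-(γ * t)) * G s := by
      rw [hG, ← mul_assoc, ← exp_add]
      ring_nf
    simp only [hexp, intervalIntegral.integral_const_mul, exp_neg, hG]
    rw [inv_mul_eq_div, div_div]
  have hGc : ContinuousOn G (Ici 0) := by
    refine (continuous_exp.comp (continuous_const_mul γ)).continuousOn.mul ?_
    exact fun t ht => (hb t ht).continuousAt.continuousWithinAt
  have hF : ∀ᶠ t in atTop, HasDerivAt (fun t => ∫ s in (0:ℝ)..t, G s) (G t) t := by
    filter_upwards [eventually_gt_atTop 0] with t ht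
    exact hasDerivAt_integral_of_continuousOn_Ici hGc ht
  have hGderiv : ∀ᶠ t in atTop, HasDerivAt G (G t * (γ + deriv b t / b t)) t := by
    filter_upwards [hb_ev, hbpos_ev] with t hbt hbt0
    have hprod : HasDerivAt G (exp (γ * t) * (γ * 1) * b t + exp (γ * t) * deriv b t) t :=
      ((hasDerivAt_id t).const_mul γ).exp.mul hbt.hasDerivAt
    convert hprod using 1
    field_simp
    ring
  have hlogDeriv : Tendsto (fun t => γ + deriv b t / b t) atTop (𝓝 γ) := by
    simpa using hbq.const_add γ
  have hGpos : ∀ᶠ t in atTop, 0 < G t := hbpos_ev.mono fun t ht => by positivity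
  simp only [hquot]
  refine lhopital_atTop_of_tendsto_atTop hF hGderiv ?_
    (tendsto_exp_mul_mul_atTop_of_tendsto_logDeriv_zero hb_ev hbpos_ev hbq hγ) ?_
  · filter_upwards [hGpos, hlogDeriv.eventually_const_lt hγ] with t hGt hγt
    positivity
  · refine ((hlogDeriv.inv₀ hγ.ne').congr' ?_).trans (by rw [one_div])
    filter_upwards [hGpos] with t hGt
    field_simp

/-- Relation (11) of Lemma 2.1: via L'Hospital's rule,
`(∫₀ᵗ e^{-γ(t-s)} b(s) ds) / b(t) → 1/γ` as `t → ∞`. -/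
theorem stmt_2 (γ : ℝ) (hγ : 0 < γ) (b : ℝ → ℝ)
    (hb : ∀ t ≥ (0:ℝ), DifferentiableAt ℝ b t)
    (hb' : ContinuousOn (deriv b) (Set.Ici (0:ℝ)))
    (hbpos : ∀ t ≥ (0:ℝ), 0 < b t)
    (hb0 : Filter.Tendsto b Filter.atTop (nhds 0))
    (hbq : Filter.Tendsto (fun t => deriv b t / b t) Filter.atTop (nhds 0)) :
    Filter.Tendsto
      (fun t => (∫ s in (0:ℝ)..t, Real.exp (-γ * (t - s)) * b s) / b t)
      Filter.atTop (nhds (1/γ)) :=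
  stmt_2_general γ hγ b hb hbpos hbq
end

section
/- Let h : ℝ → ℝ be differentiable on [0, ∞) with h(t) ≥ 0 for all t ≥ 0, and let β : ℝ → ℝ be continuous with β(t) ≥ 0 for all t ≥ 0. Assume h'(t) ≤ 2·β(t)·(h(t))^{1/2} for all t ≥ 0. Then for all t ≥ 0, (h(t))^{1/2} ≤ (h(0))^{1/2} + ∫₀ᵗ β(s) ds. -/
/-- Key intermediate step of Lemma 2.1: if `h' ≤ 2 β √h`, then
`√(h t) ≤ √(h 0) + ∫₀ᵗ β`. -/
theorem stmt_3 (h β : ℝ → ℝ)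
    (hh : ∀ t ≥ (0:ℝ), DifferentiableAt ℝ h t)
    (hhnn : ∀ t ≥ (0:ℝ), 0 ≤ h t)
    (hβ : Continuous β) (hβnn : ∀ t ≥ (0:ℝ), 0 ≤ β t)
    (hineq : ∀ t ≥ (0:ℝ), deriv h t ≤ 2 * β t * Real.sqrt (h t)) :
    ∀ t ≥ (0:ℝ), Real.sqrt (h t) ≤ Real.sqrt (h 0) + ∫ s in (0:ℝ)..t, β s := by
  intro t ht
  -- for every ε > 0, √(h t) ≤ √(h 0) + ε + ∫₀ᵗ β
  have key : ∀ ε > (0:ℝ), Real.sqrt (h t) ≤ (Real.sqrt (h 0) + ∫ s in (0:ℝ)..t, β s) + ε := by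
    intro ε hε
    set f : ℝ → ℝ := fun u => Real.sqrt (h u + ε ^ 2) with hf
    have hpos : ∀ u ≥ (0:ℝ), 0 < h u + ε ^ 2 := fun u hu =>
      add_pos_of_nonneg_of_pos (hhnn u hu) (pow_pos hε 2)
    have hfderiv : ∀ u ≥ (0:ℝ),
        HasDerivAt f (1 / (2 * Real.sqrt (h u + ε ^ 2)) * deriv h u) u := by
      intro u hu
      have h1 : HasDerivAt (fun v => h v + ε ^ 2) (deriv h u) u :=
        ((hh u hu).hasDerivAt).add_const _
      exact (Real.hasDerivAt_sqrt (ne_of_gt (hpos u hu))).comp u h1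
    set F : ℝ → ℝ := fun u => (Real.sqrt (h 0 + ε ^ 2) + ∫ s in (0:ℝ)..u, β s) - f u with hF
    have hint : ∀ u : ℝ, HasDerivAt (fun v => ∫ s in (0:ℝ)..v, β s) (β u) u := by
      intro u
      exact intervalIntegral.integral_hasDerivAt_right (hβ.intervalIntegrable _ _)
        (hβ.stronglyMeasurableAtFilter _ _) hβ.continuousAt
    have hFderiv : ∀ u ≥ (0:ℝ),
        HasDerivAt F (β u - 1 / (2 * Real.sqrt (h u + ε ^ 2)) * deriv h u) u := by
      intro u hu
      exact (((hint u).const_add _).sub (hfderiv u hu))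
    have hderiv_nonneg : ∀ u ≥ (0:ℝ),
        0 ≤ β u - 1 / (2 * Real.sqrt (h u + ε ^ 2)) * deriv h u := by
      intro u hu
      have hs : 0 < Real.sqrt (h u + ε ^ 2) := Real.sqrt_pos.2 (hpos u hu)
      have hle : Real.sqrt (h u) ≤ Real.sqrt (h u + ε ^ 2) :=
        Real.sqrt_le_sqrt (by nlinarith)
      have : deriv h u ≤ 2 * β u * Real.sqrt (h u + ε ^ 2) := by
        calc deriv h u ≤ 2 * β u * Real.sqrt (h u) := hineq u hu
        _ ≤ 2 * β u * Real.sqrt (h u + ε ^ 2) := by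
            apply mul_le_mul_of_nonneg_left hle
            have := hβnn u hu; linarith
      rw [sub_nonneg, div_mul_eq_mul_div, one_mul, div_le_iff₀ (by positivity)]
      linarith
    have hmono : MonotoneOn F (Set.Ici 0) := by
      apply monotoneOn_of_deriv_nonneg (convex_Ici 0)
      · intro u hu
        exact ((hFderiv u hu).continuousAt).continuousWithinAt
      · intro u hu
        rw [interior_Ici] at hu
        exact (hFderiv u (le_of_lt hu)).differentiableAt.differentiableWithinAt
      · intro u hu
        rw [interior_Ici] at hu
        rw [(hFderiv u (le_of_lt hu)).deriv]
        exact hderiv_nonneg u (le_of_lt hu)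
    have hF0 : F 0 = 0 := by simp [hF, hf]
    have hFt : F 0 ≤ F t := hmono Set.self_mem_Ici ht ht
    rw [hF0] at hFt
    have h1 : f t ≤ Real.sqrt (h 0 + ε ^ 2) + ∫ s in (0:ℝ)..t, β s := by
      simp only [hF] at hFt; linarith
    have h2 : Real.sqrt (h t) ≤ f t :=
      Real.sqrt_le_sqrt (by nlinarith)
    have h3 : Real.sqrt (h 0 + ε ^ 2) ≤ Real.sqrt (h 0) + ε := by
      have h4 : Real.sqrt (h 0 + ε ^ 2) ≤ Real.sqrt ((Real.sqrt (h 0) + ε) ^ 2) :=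
        Real.sqrt_le_sqrt (by nlinarith [Real.sq_sqrt (hhnn 0 le_rfl), Real.sqrt_nonneg (h 0)])
      rwa [Real.sqrt_sq (by positivity)] at h4
    linarith
  exact le_of_forall_pos_le_add key
end
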